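/- Let n ≥ 4 be an integer and set m = ⌊n/2⌋. Let E : ℕ → ℚ be any function satisfying (i) Σ_{k=0}^{m−1} E(k) = C(n,2), and (ii) Σ_{i=0}^{k} (k+1−i)·E(i) ≥ 3·C(k+3,3) for every integer k with 0 ≤ k ≤ m−2. Then 3·C(n,4) − Σ_{k=0}^{m−1} k·(n−2−k)·E(k) ≥ H(n). (This is the full arithmetic core of the paper's Theorem 2: for a good drawing D of K_n, the left-hand side with E(k) = E_k(D), the number of k-edges of D, equals the number of crossings cr(D), and hypothesis (ii) is the conclusion E_{≤≤k}(D) ≥ 3·C(k+3,3) of the paper's Lemma 3 for (⌊n/2⌋−2)-bishellable drawings; hence bishellable drawings of K_n have at least H(n) crossings.) -/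
import Mathlib


open Finset

/-- The Harary–Hill number, the conjectured crossing number of `K_n`. -/
def hararyHill (n : ℕ) : ℚ :=
  (1 / 4 : ℚ) * ((n / 2 : ℕ) : ℚ) * (((n - 1) / 2 : ℕ) : ℚ) *
    (((n - 2) / 2 : ℕ) : ℚ) * (((n - 3) / 2 : ℕ) : ℚ)

lemma key (E : ℕ → ℚ) : ∀ M : ℕ, ∑ k ∈ range M, ∑ i ∈ range (k+1), ((k:ℚ)+1-(i:ℚ))*E i
    = ∑ i ∈ range M, (((M:ℚ)-(i:ℚ))*((M:ℚ)+1-(i:ℚ))/2) * E i := by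
  intro M
  induction M with
  | zero => simp
  | succ M ih =>
    rw [sum_range_succ, ih, sum_range_succ _ M, sum_range_succ]
    have hcomb : ∑ i ∈ range M, (((M:ℚ)-(i:ℚ))*((M:ℚ)+1-(i:ℚ))/2) * E i
        + ∑ i ∈ range M, ((M:ℚ)+1-(i:ℚ))*E i
        = ∑ i ∈ range M, ((((M+1:ℕ):ℚ)-(i:ℚ))*(((M+1:ℕ):ℚ)+1-(i:ℚ))/2) * E i := by
      rw [← sum_add_distrib]
      refine sum_congr rfl fun i hi => ?_
      push_cast
      ring
    push_cast at hcomb ⊢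
    linear_combination hcomb

lemma hsN (M : ℕ) : ∑ k ∈ range (M+1), (k+3).choose 3 = (M+4).choose 4 := by
  induction M with
  | zero => decide
  | succ M ih =>
    rw [sum_range_succ, ih, show M+1+4 = (M+4)+1 from rfl,
      show (M+4+1).choose 4 = (M+4).choose 3 + (M+4).choose 4 from Nat.choose_succ_succ _ _,
      show M+1+3 = M+4 from rfl, Nat.add_comm]

lemma hc4 (x : ℕ) : (((x+4).choose 4 : ℕ) : ℚ) = (x+1)*(x+2)*(x+3)*(x+4)/24 := by
  have h := Nat.descFactorial_eq_factorial_mul_choose (x+4) 4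
  have h2 : (x+4).descFactorial 4 = (x+1)*((x+2)*((x+3)*((x+4)*1))) := by
    simp [Nat.descFactorial_succ, Nat.descFactorial_zero]
  rw [h2, show Nat.factorial 4 = 24 from rfl] at h
  have h3 : ((x:ℚ)+1)*(((x:ℚ)+2)*(((x:ℚ)+3)*(((x:ℚ)+4)*1))) = 24 * ((x+4).choose 4 : ℚ) := by
    exact_mod_cast congrArg (fun t : ℕ => (t:ℚ)) h
  rw [eq_div_iff (by norm_num : (24:ℚ) ≠ 0)]
  linarith [h3]

lemma hc3 (x : ℕ) : (((x+3).choose 3 : ℕ) : ℚ) = (x+1)*(x+2)*(x+3)/6 := by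
  have h := Nat.descFactorial_eq_factorial_mul_choose (x+3) 3
  have h2 : (x+3).descFactorial 3 = (x+1)*((x+2)*((x+3)*1)) := by
    simp [Nat.descFactorial_succ, Nat.descFactorial_zero]
  rw [h2, show Nat.factorial 3 = 6 from rfl] at h
  have h3 : ((x:ℚ)+1)*(((x:ℚ)+2)*(((x:ℚ)+3)*1)) = 6 * ((x+3).choose 3 : ℚ) := by
    exact_mod_cast congrArg (fun t : ℕ => (t:ℚ)) h
  rw [eq_div_iff (by norm_num : (6:ℚ) ≠ 0)]
  linarith [h3]

lemma aux (n M : ℕ) (a : ℚ) (ha : (n:ℚ) = 2*(M:ℚ)+5+a) (ha' : a = -1 ∨ a = 0) (E : ℕ → ℚ)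
    (hsum : ∑ k ∈ range (M+2), E k = (n.choose 2 : ℚ))
    (hlb : ∀ k, k ≤ M → ∑ i ∈ range (k+1), ((k:ℚ)+1-(i:ℚ))*E i ≥ 3*((k+3).choose 3 : ℚ)) :
    3*(n.choose 4 : ℚ) - ∑ k ∈ range (M+2), (k:ℚ)*((n:ℚ)-2-(k:ℚ))*E k
    ≥ 3*(n.choose 4 : ℚ) - ((M:ℚ)+1)*((M:ℚ)+2+a)*(n.choose 2 : ℚ)
      + 6*(((M+4).choose 4 : ℕ):ℚ) + 3*a*(((M+3).choose 3:ℕ):ℚ) := by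
  have hA : ∑ k ∈ range (M+2), (k:ℚ)*((n:ℚ)-2-(k:ℚ))*E k
      = ((M:ℚ)+1)*((M:ℚ)+2+a)*(n.choose 2:ℚ)
        - ∑ k ∈ range (M+2), (((M:ℚ)+1-(k:ℚ))*((M:ℚ)+2-(k:ℚ)+a))*E k := by
    rw [← hsum, mul_sum, ← sum_sub_distrib]
    refine sum_congr rfl fun k hk => ?_
    rw [ha]; ring
  have hB : ∑ k ∈ range (M+2), (((M:ℚ)+1-(k:ℚ))*((M:ℚ)+2-(k:ℚ)+a))*E k
      = 2*(∑ k ∈ range (M+1), ∑ i ∈ range (k+1), ((k:ℚ)+1-(i:ℚ))*E i)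
        + a * ∑ i ∈ range (M+1), ((M:ℚ)+1-(i:ℚ))*E i := by
    rw [sum_range_succ, key, mul_sum, mul_sum, ← sum_add_distrib]
    have hz : (((M:ℚ)+1-((M+1:ℕ):ℚ))*((M:ℚ)+2-((M+1:ℕ):ℚ)+a))*E (M+1) = 0 := by
      push_cast; ring
    rw [hz, add_zero]
    refine sum_congr rfl fun k hk => ?_
    push_cast
    ring
  have hAM : ∑ i ∈ range (M+1), ((M:ℚ)+1-(i:ℚ))*E i ≥ 3*(((M+3).choose 3:ℕ) : ℚ) :=
    hlb M le_rfl
  have hs3 : ∑ k ∈ range (M+1), 3*(((k+3).choose 3:ℕ):ℚ) = 3*(((M+4).choose 4:ℕ):ℚ) := by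
    rw [← mul_sum]
    congr 1
    exact_mod_cast congrArg (fun t : ℕ => (t:ℚ)) (hsN M)
  have hineq : 2*(∑ k ∈ range (M+1), ∑ i ∈ range (k+1), ((k:ℚ)+1-(i:ℚ))*E i)
        + a * ∑ i ∈ range (M+1), ((M:ℚ)+1-(i:ℚ))*E i
      ≥ 6*(((M+4).choose 4 : ℕ):ℚ) + 3*a*(((M+3).choose 3:ℕ):ℚ) := by
    have h1 : ∑ k ∈ range M, ∑ i ∈ range (k+1), ((k:ℚ)+1-(i:ℚ))*E i
        ≥ ∑ k ∈ range M, 3*(((k+3).choose 3:ℕ):ℚ) := by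
      refine sum_le_sum fun k hk => ?_
      exact hlb k (Nat.le_of_lt (mem_range.mp hk))
    rw [sum_range_succ] at hs3
    rw [sum_range_succ]
    rcases ha' with h | h <;> subst h <;> linarith
  linarith [hA, hB, hineq]

/-- The full arithmetic core of the paper's Theorem 2: if `E` satisfies
`Σ_{k=0}^{⌊n/2⌋−1} E k = C(n,2)` and `E_{≤≤k} ≥ 3·C(k+3,3)` for all
`0 ≤ k ≤ ⌊n/2⌋−2`, then `3·C(n,4) − Σ_k k(n−2−k)·E k ≥ H(n)`. -/
theorem stmt3 (n : ℕ) (hn : 4 ≤ n) (E : ℕ → ℚ)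
    (hsum : ∑ k ∈ range (n / 2), E k = (n.choose 2 : ℚ))
    (hlb : ∀ k, k ≤ n / 2 - 2 →
      ∑ i ∈ range (k + 1), ((k : ℚ) + 1 - (i : ℚ)) * E i ≥ 3 * ((k + 3).choose 3 : ℚ)) :
    3 * (n.choose 4 : ℚ) -
        ∑ k ∈ range (n / 2), (k : ℚ) * ((n : ℚ) - 2 - (k : ℚ)) * E k
      ≥ hararyHill n := by
  obtain ⟨M, hM⟩ : ∃ M, n / 2 = M + 2 := ⟨n / 2 - 2, by omega⟩
  rw [hM] at hsum ⊢
  have hlb' : ∀ k, k ≤ M → ∑ i ∈ range (k + 1), ((k : ℚ) + 1 - (i : ℚ)) * E i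
      ≥ 3 * ((k + 3).choose 3 : ℚ) := fun k hk => hlb k (by omega)
  have hpar : n = 2*M+4 ∨ n = 2*M+5 := by omega
  rcases hpar with h | h <;> subst h
  · -- even case, a = -1
    have haux := aux (2*M+4) M (-1) (by push_cast; ring) (Or.inl rfl) E hsum hlb'
    have hC4n : (((2*M+4).choose 4 : ℕ) : ℚ) = (2*(M:ℚ)+1)*(2*M+2)*(2*M+3)*(2*M+4)/24 := by
      have := hc4 (2*M); push_cast at this ⊢; linarith
    have hC2n : (((2*M+4).choose 2 : ℕ) : ℚ) = (2*(M:ℚ)+4)*(2*M+3)/2 := by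
      rw [Nat.cast_choose_two]; push_cast; ring
    have hH : hararyHill (2*M+4) = (1/4 : ℚ) * (M+2) * (M+1) * (M+1) * M := by
      rw [hararyHill, show (2*M+4)/2 = M+2 from by omega, show (2*M+4-1)/2 = M+1 from by omega,
        show (2*M+4-2)/2 = M+1 from by omega, show (2*M+4-3)/2 = M from by omega]
      push_cast; ring
    rw [hH]
    have h4 := hc4 M
    have h3 := hc3 M
    rw [hC4n, hC2n, h4, h3] at haux
    linarith [haux]
  · -- odd case, a = 0
    have haux := aux (2*M+5) M 0 (by push_cast; ring) (Or.inr rfl) E hsum hlb'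
    have hC4n : (((2*M+5).choose 4 : ℕ) : ℚ) = (2*(M:ℚ)+2)*(2*M+3)*(2*M+4)*(2*M+5)/24 := by
      have := hc4 (2*M+1)
      rw [show 2*M+1+4 = 2*M+5 from by omega] at this
      push_cast at this ⊢; linarith
    have hC2n : (((2*M+5).choose 2 : ℕ) : ℚ) = (2*(M:ℚ)+5)*(2*M+4)/2 := by
      rw [Nat.cast_choose_two]; push_cast; ring
    have hH : hararyHill (2*M+5) = (1/4 : ℚ) * (M+2) * (M+2) * (M+1) * (M+1) := by
      rw [hararyHill, show (2*M+5)/2 = M+2 from by omega, show (2*M+5-1)/2 = M+2 from by omega,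
        show (2*M+5-2)/2 = M+1 from by omega, show (2*M+5-3)/2 = M+1 from by omega]
      push_cast; ring
    rw [hH]
    have h4 := hc4 M
    rw [hC4n, hC2n, h4] at haux
    linarith [haux]
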